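/- Let A = A₀ ⊕ A₁ be a superspace with two even bilinear operations [·,·] and ∘ and an even linear map α, and let L(A), with its bracket [−,−] and the even linear map φ defined by φ(a[m]) = α(a)[m] and φ(u[m]) = α(u)[m], be the affinization of A. If (A, [·,·], ∘, α) is a super Hom-Gel'fand-Dorfman bialgebra, then (L(A), [−,−], φ) is a Hom-Lie superalgebra. -/

import Mathlib

noncomputable section

/-- The sign `(-1)^{|x||y|}` attached to parities `i, j` in `ℤ₂`. -/
def sg (i j : ZMod 2) : ℂ := (-1 : ℂ) ^ (i.val * j.val)

variable {A : Type*} [AddCommGroup A] [Module ℂ A]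

/-- `gr` makes `A` into a superspace: `A = A₀ ⊕ A₁`. -/
def IsSupergrading (gr : ZMod 2 → Submodule ℂ A) : Prop :=
  (∀ x : A, ∃ x0 ∈ gr 0, ∃ x1 ∈ gr 1, x = x0 + x1) ∧ (gr 0 ⊓ gr 1 = ⊥)

/-- An even linear map: it preserves the grading. -/
def EvenLin (gr : ZMod 2 → Submodule ℂ A) (α : A →ₗ[ℂ] A) : Prop :=
  ∀ i : ZMod 2, ∀ x ∈ gr i, α x ∈ gr i

/-- An even bilinear map: it adds parities. -/
def EvenBilin (gr : ZMod 2 → Submodule ℂ A) (m : A →ₗ[ℂ] A →ₗ[ℂ] A) : Prop :=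
  ∀ i j : ZMod 2, ∀ x ∈ gr i, ∀ y ∈ gr j, m x y ∈ gr (i + j)

/-- A Hom-Lie superalgebra structure on the superspace `(A, gr)`. -/
def HomLieSuper (gr : ZMod 2 → Submodule ℂ A) (br : A →ₗ[ℂ] A →ₗ[ℂ] A)
    (α : A →ₗ[ℂ] A) : Prop :=
  EvenLin gr α ∧ EvenBilin gr br ∧
  (∀ (i j : ZMod 2), ∀ x ∈ gr i, ∀ y ∈ gr j, br x y = -(sg i j • br y x)) ∧
  (∀ (i j k : ZMod 2), ∀ x ∈ gr i, ∀ y ∈ gr j, ∀ z ∈ gr k,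
    sg i k • br (br x y) (α z) + sg i j • br (br y z) (α x)
      + sg j k • br (br z x) (α y) = 0)

/-- A Hom-Novikov superalgebra structure on the superspace `(A, gr)`. -/
def HomNovikovSuper (gr : ZMod 2 → Submodule ℂ A) (c : A →ₗ[ℂ] A →ₗ[ℂ] A)
    (α : A →ₗ[ℂ] A) : Prop :=
  EvenLin gr α ∧ EvenBilin gr c ∧
  (∀ (i j k : ZMod 2), ∀ x ∈ gr i, ∀ y ∈ gr j, ∀ z ∈ gr k,
    c (c x y) (α z) - c (α x) (c y z) = sg i j • (c (c y x) (α z) - c (α y) (c x z))) ∧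
  (∀ (i j k : ZMod 2), ∀ x ∈ gr i, ∀ y ∈ gr j, ∀ z ∈ gr k,
    c (c x y) (α z) = sg j k • c (c x z) (α y))

/-- A super Hom-Gel'fand-Dorfman bialgebra structure on the superspace `(A, gr)`. -/
def SuperHomGD (gr : ZMod 2 → Submodule ℂ A) (br c : A →ₗ[ℂ] A →ₗ[ℂ] A)
    (α : A →ₗ[ℂ] A) : Prop :=
  HomLieSuper gr br α ∧ HomNovikovSuper gr c α ∧
  (∀ (i j k : ZMod 2), ∀ x ∈ gr i, ∀ y ∈ gr j, ∀ z ∈ gr k,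
    br (c x y) (α z) - sg j k • br (c x z) (α y) + c (br x y) (α z)
      - sg j k • c (br x z) (α y) - c (α x) (br y z) = 0)

/-- A Lie superalgebra structure on the superspace `(A, gr)`. -/
def LieSuper (gr : ZMod 2 → Submodule ℂ A) (br : A →ₗ[ℂ] A →ₗ[ℂ] A) : Prop :=
  EvenBilin gr br ∧
  (∀ (i j : ZMod 2), ∀ x ∈ gr i, ∀ y ∈ gr j, br x y = -(sg i j • br y x)) ∧
  (∀ (i j k : ZMod 2), ∀ x ∈ gr i, ∀ y ∈ gr j, ∀ z ∈ gr k,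
    sg i k • br (br x y) z + sg i j • br (br y z) x + sg j k • br (br z x) y = 0)

/-- A Novikov superalgebra structure on the superspace `(A, gr)`. -/
def NovikovSuper (gr : ZMod 2 → Submodule ℂ A) (c : A →ₗ[ℂ] A →ₗ[ℂ] A) : Prop :=
  EvenBilin gr c ∧
  (∀ (i j k : ZMod 2), ∀ x ∈ gr i, ∀ y ∈ gr j, ∀ z ∈ gr k,
    c (c x y) z - c x (c y z) = sg i j • (c (c y x) z - c y (c x z))) ∧
  (∀ (i j k : ZMod 2), ∀ x ∈ gr i, ∀ y ∈ gr j, ∀ z ∈ gr k,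
    c (c x y) z = sg j k • c (c x z) y)

/-- A super Gel'fand-Dorfman bialgebra structure on the superspace `(A, gr)`. -/
def SuperGD (gr : ZMod 2 → Submodule ℂ A) (br c : A →ₗ[ℂ] A →ₗ[ℂ] A) : Prop :=
  LieSuper gr br ∧ NovikovSuper gr c ∧
  (∀ (i j k : ZMod 2), ∀ x ∈ gr i, ∀ y ∈ gr j, ∀ z ∈ gr k,
    br (c x y) z - sg j k • br (c x z) y + c (br x y) z
      - sg j k • c (br x z) y - c x (br y z) = 0)


/-- The grading induced on `σ →₀ A` by a grading of `A` (coefficientwise). -/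
def grFinsupp {A : Type*} [AddCommGroup A] [Module ℂ A] (σ : Type*)
    (gr : ZMod 2 → Submodule ℂ A) (i : ZMod 2) : Submodule ℂ (σ →₀ A) where
  carrier := {f | ∀ s : σ, f s ∈ gr i}
  add_mem' := by
    intro f g hf hg s
    rw [Finsupp.add_apply]
    exact add_mem (hf s) (hg s)
  zero_mem' := by
    intro s
    rw [Finsupp.zero_apply]
    exact zero_mem _
  smul_mem' := by
    intro t f hf s
    rw [Finsupp.smul_apply]
    exact Submodule.smul_mem _ t (hf s)

/-- The bracket of the affinization `L(A)`, determined on the homogeneous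
generators `a[m] = a ⊗ tᵐ` (for `a ∈ A₀`) and `u[m] = u ⊗ t^{m+1/2}` (for `u ∈ A₁`). -/
def AffBracket {A : Type*} [AddCommGroup A] [Module ℂ A]
    (gr : ZMod 2 → Submodule ℂ A) (br c : A →ₗ[ℂ] A →ₗ[ℂ] A)
    (B : (ℤ →₀ A) →ₗ[ℂ] (ℤ →₀ A) →ₗ[ℂ] (ℤ →₀ A)) : Prop :=
  (∀ (m n : ℤ), ∀ a ∈ gr 0, ∀ b ∈ gr 0,
    B (Finsupp.single m a) (Finsupp.single n b)
      = Finsupp.single (m + n) (br a b)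
        + Finsupp.single (m + n - 1) ((m : ℂ) • c a b - (n : ℂ) • c b a)) ∧
  (∀ (m n : ℤ), ∀ a ∈ gr 0, ∀ u ∈ gr 1,
    B (Finsupp.single m a) (Finsupp.single n u)
      = Finsupp.single (m + n) (br a u)
        + Finsupp.single (m + n - 1)
            ((m : ℂ) • c a u - ((n : ℂ) + (1 / 2 : ℂ)) • c u a)) ∧
  (∀ (m n : ℤ), ∀ u ∈ gr 1, ∀ a ∈ gr 0,
    B (Finsupp.single n u) (Finsupp.single m a)
      = Finsupp.single (m + n) (br u a)
        + Finsupp.single (m + n - 1)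
            (((n : ℂ) + (1 / 2 : ℂ)) • c u a - (m : ℂ) • c a u)) ∧
  (∀ (m n : ℤ), ∀ u ∈ gr 1, ∀ v ∈ gr 1,
    B (Finsupp.single m u) (Finsupp.single n v)
      = Finsupp.single (m + n + 1) (br u v)
        + Finsupp.single (m + n)
            (((m : ℂ) + (1 / 2 : ℂ)) • c u v + ((n : ℂ) + (1 / 2 : ℂ)) • c v u))

/-!
Give `u[m]` (for odd `u`) the `t`-degree `m + 1/2` and `a[m]` (for even `a`) the degree `m`.
Then on generators the bracket of `L(A)` is, uniformly in the parities, `[x,y]` in the top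
degree plus `deg x · x∘y - (-1)^{|x||y|} deg y · y∘x` one degree lower. The super
Hom-Jacobiator of three generators therefore has three homogeneous components: the top one
is the Hom-Jacobi identity of `(A, [·,·], α)`, the next one is the compatibility condition
weighted by the degrees, and the lowest one is a combination of the two Hom-Novikov
identities with coefficients quadratic in the degrees. Homogeneous elements of `L(A)` are
sums of generators, and everything is additive.
-/

theorem ZMod.eq_zero_or_eq_one (i : ZMod 2) : i = 0 ∨ i = 1 := by
  fin_cases i
  exacts [Or.inl rfl, Or.inr rfl]

@[simp] theorem sg_zero_left (j : ZMod 2) : sg 0 j = 1 := by simp [sg]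

@[simp] theorem sg_zero_right (i : ZMod 2) : sg i 0 = 1 := by simp [sg]

@[simp] theorem sg_one_one : sg 1 1 = -1 := by simp [sg, ZMod.val_one]

theorem sg_comm (i j : ZMod 2) : sg i j = sg j i := by
  rw [sg, sg, mul_comm]

theorem sg_mul_self (i j : ZMod 2) : sg i j * sg i j = 1 := by
  rw [sg, ← mul_pow]; norm_num

/-- `x[m]` for `x ∈ A_i` stands for `x ⊗ t ^ affDegree i m`. -/
def affDegree (i : ZMod 2) (m : ℤ) : ℂ := m + i.val / 2

/-- `[x[m], y[n]]` has its top component at index `m + n + parityCarry i j`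
(see `affDegree_add`). -/
def parityCarry (i j : ZMod 2) : ℤ := i.val * j.val

@[simp] theorem affDegree_zero (m : ℤ) : affDegree 0 m = m := by simp [affDegree]

@[simp] theorem affDegree_one (m : ℤ) : affDegree 1 m = m + 1 / 2 := by
  simp [affDegree, ZMod.val_one]

@[simp] theorem parityCarry_zero_left (j : ZMod 2) : parityCarry 0 j = 0 := by
  simp [parityCarry]

@[simp] theorem parityCarry_zero_right (i : ZMod 2) : parityCarry i 0 = 0 := by
  simp [parityCarry]

@[simp] theorem parityCarry_one_one : parityCarry 1 1 = 1 := by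
  simp [parityCarry, ZMod.val_one]

theorem parityCarry_comm (i j : ZMod 2) : parityCarry i j = parityCarry j i := by
  rw [parityCarry, parityCarry, mul_comm]

theorem parityCarry_add_cycle (i j k : ZMod 2) :
    parityCarry i j + parityCarry (i + j) k = parityCarry j k + parityCarry (j + k) i := by
  obtain rfl | rfl := i.eq_zero_or_eq_one <;> obtain rfl | rfl := j.eq_zero_or_eq_one <;>
    obtain rfl | rfl := k.eq_zero_or_eq_one <;> simp [CharTwo.add_self_eq_zero]

theorem affDegree_sub_one (i : ZMod 2) (m : ℤ) : affDegree i (m - 1) = affDegree i m - 1 := by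
  simp only [affDegree]; push_cast; ring

theorem affDegree_add (i j : ZMod 2) (m n : ℤ) :
    affDegree (i + j) (m + n + parityCarry i j) = affDegree i m + affDegree j n := by
  obtain rfl | rfl := i.eq_zero_or_eq_one <;> obtain rfl | rfl := j.eq_zero_or_eq_one <;>
    simp [CharTwo.add_self_eq_zero] <;> ring

def circPart (c : A →ₗ[ℂ] A →ₗ[ℂ] A) (ε w w' : ℂ) (x y : A) : A :=
  w • c x y - ε • w' • c y x

theorem circPart_swap (c : A →ₗ[ℂ] A →ₗ[ℂ] A) {ε : ℂ} (hε : ε * ε = 1) (w w' : ℂ) (x y : A) :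
    circPart c ε w' w y x = -(ε • circPart c ε w w' x y) := by
  simp only [circPart]
  linear_combination (norm := module) (-w') • hε • c y x

theorem circPart_mem {gr : ZMod 2 → Submodule ℂ A} {c : A →ₗ[ℂ] A →ₗ[ℂ] A}
    (hc : EvenBilin gr c) {i j : ZMod 2} {x y : A} (hx : x ∈ gr i) (hy : y ∈ gr j)
    (ε w w' : ℂ) : circPart c ε w w' x y ∈ gr (i + j) := by
  refine sub_mem (Submodule.smul_mem _ _ (hc i j x hx y hy)) (Submodule.smul_mem _ _ ?_)
  refine Submodule.smul_mem _ _ ?_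
  simpa [add_comm] using hc j i y hy x hx

def nestedCoeff₁ (br c : A →ₗ[ℂ] A →ₗ[ℂ] A) (ε ε' a b d : ℂ) (x y z : A) : A :=
  circPart c ε' (a + b) d (br x y) z + br (circPart c ε a b x y) z

def nestedCoeff₂ (c : A →ₗ[ℂ] A →ₗ[ℂ] A) (ε ε' a b d : ℂ) (x y z : A) : A :=
  circPart c ε' (a + b - 1) d (circPart c ε a b x y) z

theorem map_bracket_swap {gr : ZMod 2 → Submodule ℂ A} {br : A →ₗ[ℂ] A →ₗ[ℂ] A}
    (hskew : ∀ (i j : ZMod 2), ∀ x ∈ gr i, ∀ y ∈ gr j, br x y = -(sg i j • br y x))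
    (f : A →ₗ[ℂ] A) {i j : ZMod 2} {x y : A} (hx : x ∈ gr i) (hy : y ∈ gr j) :
    f (br x y) = -(sg i j • f (br y x)) := by
  rw [hskew i j x hx y hy, map_neg, map_smul]

theorem SuperHomGD.cyclicSum_nestedCoeff₁_eq_zero {gr : ZMod 2 → Submodule ℂ A}
    {br c : A →ₗ[ℂ] A →ₗ[ℂ] A} {α : A →ₗ[ℂ] A} (hGD : SuperHomGD gr br c α)
    {i j k : ZMod 2} {x y z : A} (hx : x ∈ gr i) (hy : y ∈ gr j) (hz : z ∈ gr k) (a b d : ℂ) :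
    sg i k • nestedCoeff₁ br c (sg i j) (sg (i + j) k) a b d x y (α z)
      + sg i j • nestedCoeff₁ br c (sg j k) (sg (j + k) i) b d a y z (α x)
      + sg j k • nestedCoeff₁ br c (sg k i) (sg (k + i) j) d a b z x (α y) = 0 := by
  obtain ⟨⟨-, -, hskew, -⟩, -, hC⟩ := hGD
  have C₁ := hC i j k x hx y hy z hz
  have C₂ := hC j k i y hy z hz x hx
  have C₃ := hC k i j z hz x hx y hy
  have K₁ := map_bracket_swap hskew (c.flip (α y)) hx hz
  have K₂ := map_bracket_swap hskew (c.flip (α z)) hy hx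
  have K₃ := map_bracket_swap hskew (c.flip (α x)) hz hy
  simp only [LinearMap.flip_apply] at K₁ K₂ K₃
  simp only [nestedCoeff₁, circPart, map_sub, map_smul, LinearMap.sub_apply, LinearMap.smul_apply]
  linear_combination (norm := skip) (sg i k * a) • C₁ + (sg i j * b) • C₂ + (sg j k * d) • C₃
    + (a * sg i k * sg j k) • K₁ + (b * sg i j * sg i k) • K₂ + (d * sg j k * sg i j) • K₃
  match_scalars <;>
    obtain rfl | rfl := i.eq_zero_or_eq_one <;> obtain rfl | rfl := j.eq_zero_or_eq_one <;>
    obtain rfl | rfl := k.eq_zero_or_eq_one <;> simp [CharTwo.add_self_eq_zero]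

theorem HomNovikovSuper.cyclicSum_nestedCoeff₂_eq_zero {gr : ZMod 2 → Submodule ℂ A}
    {c : A →ₗ[ℂ] A →ₗ[ℂ] A} {α : A →ₗ[ℂ] A} (hN : HomNovikovSuper gr c α)
    {i j k : ZMod 2} {x y z : A} (hx : x ∈ gr i) (hy : y ∈ gr j) (hz : z ∈ gr k) (a b d : ℂ) :
    sg i k • nestedCoeff₂ c (sg i j) (sg (i + j) k) a b d x y (α z)
      + sg i j • nestedCoeff₂ c (sg j k) (sg (j + k) i) b d a y z (α x)
      + sg j k • nestedCoeff₂ c (sg k i) (sg (k + i) j) d a b z x (α y) = 0 := by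
  obtain ⟨-, -, hLeftSymm, hRightComm⟩ := hN
  have L₁ := hLeftSymm i j k x hx y hy z hz
  have L₂ := hLeftSymm j k i y hy z hz x hx
  have L₃ := hLeftSymm k i j z hz x hx y hy
  have R₁ := hRightComm i j k x hx y hy z hz
  have R₂ := hRightComm j k i y hy z hz x hx
  have R₃ := hRightComm k i j z hz x hx y hy
  simp only [nestedCoeff₂, circPart, map_sub, map_smul, LinearMap.sub_apply, LinearMap.smul_apply]
  linear_combination (norm := skip) (sg i k * a * b) • L₁ + (sg i j * b * d) • L₂
    + (sg j k * a * d) • L₃ + (sg i k * (a ^ 2 - a)) • R₁ + (sg i j * (b ^ 2 - b)) • R₂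
    + (sg j k * (d ^ 2 - d)) • R₃
  match_scalars <;>
    obtain rfl | rfl := i.eq_zero_or_eq_one <;> obtain rfl | rfl := j.eq_zero_or_eq_one <;>
    obtain rfl | rfl := k.eq_zero_or_eq_one <;> simp [CharTwo.add_self_eq_zero] <;> ring

theorem single_mem_grFinsupp {σ : Type*} {gr : ZMod 2 → Submodule ℂ A} {i : ZMod 2} {a : A}
    (ha : a ∈ gr i) (s : σ) : Finsupp.single s a ∈ grFinsupp σ gr i := by
  classical
  intro t
  rw [Finsupp.single_apply]
  split_ifs
  exacts [ha, zero_mem _]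

theorem grFinsupp_induction {σ : Type*} {gr : ZMod 2 → Submodule ℂ A} {i : ZMod 2}
    {P : (σ →₀ A) → Prop} (zero : P 0) (add : ∀ f g, P f → P g → P (f + g))
    (single : ∀ s, ∀ a ∈ gr i, P (Finsupp.single s a)) {f : σ →₀ A}
    (hf : f ∈ grFinsupp σ gr i) : P f := by
  rw [← f.sum_single]
  exact Finset.sum_induction _ P add zero fun s _ => single s (f s) (hf s)

theorem EvenLin.mapRange {σ : Type*} {gr : ZMod 2 → Submodule ℂ A} {α : A →ₗ[ℂ] A}
    (hα : EvenLin gr α) : EvenLin (grFinsupp σ gr) (Finsupp.mapRange.linearMap α) :=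
  fun i _ hf s => hα i _ (hf s)

def superJacobiator {M : Type*} [AddCommGroup M] [Module ℂ M] (br : M →ₗ[ℂ] M →ₗ[ℂ] M)
    (α : M →ₗ[ℂ] M) (i j k : ZMod 2) (x y z : M) : M :=
  sg i k • br (br x y) (α z) + sg i j • br (br y z) (α x) + sg j k • br (br z x) (α y)

theorem superJacobiator_cycle {M : Type*} [AddCommGroup M] [Module ℂ M]
    (br : M →ₗ[ℂ] M →ₗ[ℂ] M) (α : M →ₗ[ℂ] M) (i j k : ZMod 2) (x y z : M) :
    superJacobiator br α i j k x y z = superJacobiator br α j k i y z x := by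
  simp only [superJacobiator, sg_comm i k, sg_comm i j, sg_comm j k]
  abel

theorem superJacobiator_add_left {M : Type*} [AddCommGroup M] [Module ℂ M]
    (br : M →ₗ[ℂ] M →ₗ[ℂ] M) (α : M →ₗ[ℂ] M) (i j k : ZMod 2) (x x' y z : M) :
    superJacobiator br α i j k (x + x') y z
      = superJacobiator br α i j k x y z + superJacobiator br α i j k x' y z := by
  simp only [superJacobiator, map_add, LinearMap.add_apply, smul_add]
  abel

section Affinization

open Finsupp

variable {gr : ZMod 2 → Submodule ℂ A} {br c : A →ₗ[ℂ] A →ₗ[ℂ] A} {α : A →ₗ[ℂ] A}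
  {B : (ℤ →₀ A) →ₗ[ℂ] (ℤ →₀ A) →ₗ[ℂ] (ℤ →₀ A)}

theorem AffBracket.single_single (hB : AffBracket gr br c B)
    {i j : ZMod 2} {x y : A} (hx : x ∈ gr i) (hy : y ∈ gr j) (m n : ℤ) :
    B (single m x) (single n y) = single (m + n + parityCarry i j) (br x y)
      + single (m + n + parityCarry i j - 1)
          (circPart c (sg i j) (affDegree i m) (affDegree j n) x y) := by
  obtain ⟨h00, h01, h10, h11⟩ := hB
  obtain rfl | rfl := i.eq_zero_or_eq_one <;> obtain rfl | rfl := j.eq_zero_or_eq_one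
  · simp [h00 m n x hx y hy, circPart]
  · simp [h01 m n x hx y hy, circPart]
  · simp [h10 n m x hx y hy, circPart, add_comm]
  · simp [h11 m n x hx y hy, circPart]

theorem AffBracket.bracket_single_single (hB : AffBracket gr br c B) (hbr : EvenBilin gr br)
    (hc : EvenBilin gr c) {i j k : ZMod 2} {x y z : A} (hx : x ∈ gr i) (hy : y ∈ gr j)
    (hz : z ∈ gr k) (m n p : ℤ) :
    let N := m + n + p + parityCarry i j + parityCarry (i + j) k
    let a := affDegree i m
    let b := affDegree j n
    let d := affDegree k p
    B (B (single m x) (single n y)) (single p z) =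
      single N (br (br x y) z)
        + single (N - 1) (nestedCoeff₁ br c (sg i j) (sg (i + j) k) a b d x y z)
        + single (N - 2) (nestedCoeff₂ c (sg i j) (sg (i + j) k) a b d x y z) := by
  intro N a b d
  rw [hB.single_single hx hy, map_add, LinearMap.add_apply,
    hB.single_single (hbr i j x hx y hy) hz, hB.single_single (circPart_mem hc hx hy _ _ _) hz,
    affDegree_sub_one, affDegree_add]
  simp only [nestedCoeff₁, nestedCoeff₂, single_add]
  rw [show m + n + parityCarry i j + p + parityCarry (i + j) k = N by ring,
    show m + n + parityCarry i j - 1 + p + parityCarry (i + j) k = N - 1 by ring,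
    show N - 1 - 1 = N - 2 by ring]
  abel

theorem AffBracket.evenBilin (hB : AffBracket gr br c B) (hbr : EvenBilin gr br)
    (hc : EvenBilin gr c) : EvenBilin (grFinsupp ℤ gr) B := by
  intro i j f hf g hg
  refine grFinsupp_induction (P := fun f ↦ B f g ∈ _) (by simp [zero_mem])
    (fun f f' ih ih' => by simpa using add_mem ih ih') (fun m x hx => ?_) hf
  refine grFinsupp_induction (P := fun g ↦ B _ g ∈ _) (by simp [zero_mem])
    (fun g g' ih ih' => by simpa using add_mem ih ih') (fun n y hy => ?_) hg
  rw [hB.single_single hx hy]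
  exact add_mem (single_mem_grFinsupp (hbr i j x hx y hy) _)
    (single_mem_grFinsupp (circPart_mem hc hx hy _ _ _) _)

theorem AffBracket.single_swap (hB : AffBracket gr br c B)
    (hskew : ∀ (i j : ZMod 2), ∀ x ∈ gr i, ∀ y ∈ gr j, br x y = -(sg i j • br y x))
    {i j : ZMod 2} {x y : A} (hx : x ∈ gr i) (hy : y ∈ gr j) (m n : ℤ) :
    B (single m x) (single n y) = -(sg i j • B (single n y) (single m x)) := by
  rw [hB.single_single hx hy, hB.single_single hy hx, hskew j i y hy x hx, sg_comm j i,
    parityCarry_comm j i, add_comm n m, circPart_swap c (sg_mul_self i j)]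
  simp only [single_neg, ← smul_single, smul_add, smul_neg, neg_neg, smul_smul, sg_mul_self,
    one_smul, neg_add_rev]
  abel

theorem AffBracket.swap (hB : AffBracket gr br c B)
    (hskew : ∀ (i j : ZMod 2), ∀ x ∈ gr i, ∀ y ∈ gr j, br x y = -(sg i j • br y x))
    (i j : ZMod 2) (f : ℤ →₀ A) (hf : f ∈ grFinsupp ℤ gr i) (g : ℤ →₀ A)
    (hg : g ∈ grFinsupp ℤ gr j) : B f g = -(sg i j • B g f) := by
  refine grFinsupp_induction (P := fun f ↦ B f g = -(sg i j • B g f)) (by simp)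
    (fun f f' ih ih' => by simp [ih, ih', add_comm]) (fun m x hx => ?_) hf
  refine grFinsupp_induction (P := fun g ↦ B _ g = -(sg i j • B g _)) (by simp)
    (fun g g' ih ih' => by simp [ih, ih', add_comm]) (fun n y hy => ?_) hg
  exact hB.single_swap hskew hx hy m n

theorem AffBracket.superJacobiator_single (hB : AffBracket gr br c B)
    (hGD : SuperHomGD gr br c α) {i j k : ZMod 2} {x y z : A} (hx : x ∈ gr i) (hy : y ∈ gr j)
    (hz : z ∈ gr k) (m n p : ℤ) :
    superJacobiator B (mapRange.linearMap α) i j k (single m x) (single n y) (single p z)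
      = 0 := by
  obtain ⟨hα, hbr, -, hJac⟩ := hGD.1
  have hc := hGD.2.1.2.1
  have hN₂ : n + p + m + parityCarry j k + parityCarry (j + k) i
      = m + n + p + parityCarry i j + parityCarry (i + j) k := by
    linear_combination (parityCarry_add_cycle i j k).symm
  have hN₃ : p + m + n + parityCarry k i + parityCarry (k + i) j
      = m + n + p + parityCarry i j + parityCarry (i + j) k := by
    linear_combination parityCarry_add_cycle k i j
  simp only [superJacobiator, mapRange.linearMap_apply, mapRange_single]
  rw [hB.bracket_single_single hbr hc hx hy (hα k z hz),
    hB.bracket_single_single hbr hc hy hz (hα i x hx),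
    hB.bracket_single_single hbr hc hz hx (hα j y hy), hN₂, hN₃]
  set N := m + n + p + parityCarry i j + parityCarry (i + j) k
  have e₀ := congrArg (single N) (hJac i j k x hx y hy z hz)
  have e₁ := congrArg (single (N - 1))
    (hGD.cyclicSum_nestedCoeff₁_eq_zero hx hy hz (affDegree i m) (affDegree j n) (affDegree k p))
  have e₂ := congrArg (single (N - 2))
    (hGD.2.1.cyclicSum_nestedCoeff₂_eq_zero hx hy hz (affDegree i m) (affDegree j n)
      (affDegree k p))
  simp only [single_zero, single_add, ← smul_single] at e₀ e₁ e₂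
  linear_combination (norm := module) e₀ + e₁ + e₂

theorem AffBracket.superJacobiator_eq_zero (hB : AffBracket gr br c B)
    (hGD : SuperHomGD gr br c α) (i j k : ZMod 2) (x : ℤ →₀ A) (hx : x ∈ grFinsupp ℤ gr i)
    (y : ℤ →₀ A) (hy : y ∈ grFinsupp ℤ gr j) (z : ℤ →₀ A) (hz : z ∈ grFinsupp ℤ gr k) :
    superJacobiator B (mapRange.linearMap α) i j k x y z = 0 := by
  set φ : (ℤ →₀ A) →ₗ[ℂ] (ℤ →₀ A) := mapRange.linearMap α
  have extend : ∀ {i j k : ZMod 2} {y z : ℤ →₀ A},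
      (∀ m, ∀ a ∈ gr i, superJacobiator B φ i j k (single m a) y z = 0) →
      ∀ x ∈ grFinsupp ℤ gr i, superJacobiator B φ i j k x y z = 0 := by
    intro i j k y z h x hx
    refine grFinsupp_induction (P := fun x ↦ superJacobiator B φ i j k x y z = 0)
      (by simp [superJacobiator]) (fun f f' ih ih' => ?_) h hx
    rw [superJacobiator_add_left, ih, ih', add_zero]
  rw [superJacobiator_cycle, superJacobiator_cycle]
  refine extend (fun p e he => ?_) z hz
  rw [superJacobiator_cycle]
  refine extend (fun m a ha => ?_) x hx
  rw [superJacobiator_cycle]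
  refine extend (fun n b hb => ?_) y hy
  exact hB.superJacobiator_single hGD hb he ha n p m

end Affinization

theorem homLieSuper_affinization_general
    {A : Type*} [AddCommGroup A] [Module ℂ A]
    (gr : ZMod 2 → Submodule ℂ A)
    (br c : A →ₗ[ℂ] A →ₗ[ℂ] A) (α : A →ₗ[ℂ] A)
    (B : (ℤ →₀ A) →ₗ[ℂ] (ℤ →₀ A) →ₗ[ℂ] (ℤ →₀ A))
    (hB : AffBracket gr br c B)
    (hGD : SuperHomGD gr br c α) :
    HomLieSuper (grFinsupp ℤ gr) B (Finsupp.mapRange.linearMap α) := by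
  obtain ⟨hα, hbr, hskew, -⟩ := hGD.1
  obtain ⟨-, hc, -, -⟩ := hGD.2.1
  exact ⟨hα.mapRange, hB.evenBilin hbr hc, hB.swap hskew, hB.superJacobiator_eq_zero hGD⟩

/-- If `(A, [·,·], ∘, α)` is a super Hom-Gel'fand-Dorfman bialgebra,
then the affinization `(L(A), [−,−], φ)`, with `φ(x[m]) = α(x)[m]`, is a Hom-Lie
superalgebra. -/
theorem homLieSuper_affinization
    {A : Type*} [AddCommGroup A] [Module ℂ A]
    (gr : ZMod 2 → Submodule ℂ A) (hgr : IsSupergrading gr)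
    (br c : A →ₗ[ℂ] A →ₗ[ℂ] A) (α : A →ₗ[ℂ] A)
    (B : (ℤ →₀ A) →ₗ[ℂ] (ℤ →₀ A) →ₗ[ℂ] (ℤ →₀ A))
    (hB : AffBracket gr br c B)
    (hGD : SuperHomGD gr br c α) :
    HomLieSuper (grFinsupp ℤ gr) B (Finsupp.mapRange.linearMap α) :=
  homLieSuper_affinization_general gr br c α B hB hGD

end
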